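/- arXiv:2502.19165 — 6 statements merged into one kernel-verified Lean document; each statement's English description precedes it below -/
import Mathlib

section
/- Let f : A → A' and g : B → B' be surjective group homomorphisms. Then the induced homomorphism f ∗ g : A ∗ B → A' ∗ B' on free products maps the cosmash product A ⋄ B onto A' ⋄ B'. Likewise, for a further surjective group homomorphism l : C → C', the induced homomorphism f ∗ g ∗ l : A ∗ B ∗ C → A' ∗ B' ∗ C' maps the ternary cosmash product A ⋄ B ⋄ C onto A' ⋄ B' ⋄ C'. -/
/-!
Both comparison kernels are intersections of kernels of retractions `r` (with sections `i`):
`A ⋄ B = ker fst ⊓ ker snd`, and `A ⋄ B ⋄ C` is cut out by the three projections killing one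
factor. Imposing these conditions one at a time, a preimage `x` of an element of the target
kernel is corrected to `(i (r x))⁻¹ * x`, which lies in `ker r` and has the same image, because
`i (r x)` maps to `i' (r' (φ x)) = 1`. The sections are chosen so that each correction preserves
the conditions imposed before it.
-/

open Monoid Function
open scoped Monoid.Coprod

/-- The comparison homomorphism `Σ_{A,B} : A ∗ B →* A × B`. -/
def cosmashCompare (A B : Type*) [Group A] [Group B] : (A ∗ B) →* A × B :=
  Monoid.Coprod.lift (MonoidHom.inl A B) (MonoidHom.inr A B)

/-- The (binary) cosmash product `A ⋄ B = ker Σ_{A,B}`. -/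
def cosmash (A B : Type*) [Group A] [Group B] : Subgroup (A ∗ B) :=
  (cosmashCompare A B).ker

/-- The ternary comparison homomorphism
`Σ_{A,B,C} : A ∗ B ∗ C →* (A ∗ B) × (A ∗ C) × (B ∗ C)`. -/
def cosmashCompare₃ (A B C : Type*) [Group A] [Group B] [Group C] :
    (A ∗ (B ∗ C)) →* (A ∗ B) × (A ∗ C) × (B ∗ C) :=
  Monoid.Coprod.lift
    ((Monoid.Coprod.inl : A →* A ∗ B).prod
      (((Monoid.Coprod.inl : A →* A ∗ C)).prod (1 : A →* B ∗ C)))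
    (Monoid.Coprod.lift
      ((Monoid.Coprod.inr : B →* A ∗ B).prod
        ((1 : B →* A ∗ C).prod (Monoid.Coprod.inl : B →* B ∗ C)))
      ((1 : C →* A ∗ B).prod
        ((Monoid.Coprod.inr : C →* A ∗ C).prod (Monoid.Coprod.inr : C →* B ∗ C))))

/-- The ternary cosmash product `A ⋄ B ⋄ C = ker Σ_{A,B,C}`. -/
def cosmash₃ (A B C : Type*) [Group A] [Group B] [Group C] :
    Subgroup (A ∗ (B ∗ C)) :=
  (cosmashCompare₃ A B C).ker

namespace Monoid.Coprod

variable {M N M' N' : Type*} [Monoid M] [Monoid N] [Monoid M'] [Monoid N']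

theorem fst_comp_map (f : M →* M') (g : N →* N') : fst.comp (map f g) = f.comp fst :=
  hom_ext (by ext; simp) (by ext; simp)

theorem snd_comp_map (f : M →* M') (g : N →* N') : snd.comp (map f g) = g.comp snd :=
  hom_ext (by ext; simp) (by ext; simp)

@[simp]
theorem fst_map (f : M →* M') (g : N →* N') (x : M ∗ N) : fst (map f g x) = f (fst x) :=
  DFunLike.congr_fun (fst_comp_map f g) x

@[simp]
theorem snd_map (f : M →* M') (g : N →* N') (x : M ∗ N) : snd (map f g x) = g (snd x) :=
  DFunLike.congr_fun (snd_comp_map f g) x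

theorem map_surjective {f : M →* M'} {g : N →* N'} (hf : Surjective f) (hg : Surjective g) :
    Surjective (map f g) := by
  rw [← MonoidHom.mrange_eq_top, mrange_eq, map_comp_inl, map_comp_inr, MonoidHom.mrange_comp,
    MonoidHom.mrange_comp, MonoidHom.mrange_eq_top_of_surjective f hf,
    MonoidHom.mrange_eq_top_of_surjective g hg, ← MonoidHom.mrange_eq_map,
    ← MonoidHom.mrange_eq_map, mrange_inl_sup_mrange_inr]

end Monoid.Coprod

namespace Subgroup

variable {G G' K K' : Type*} [Group G] [Group G'] [Group K] [Group K']

theorem map_inf_ker_eq_of_retraction {φ : G →* G'} {P : Subgroup G} {P' : Subgroup G'}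
    (hP : P.map φ = P') {r : G →* K} {i : K →* G} (hri : r.comp i = .id K)
    (hiP : ∀ x ∈ P, i (r x) ∈ P) {r' : G' →* K'} {i' : K' →* G'} {ψ : K →* K'}
    (hr : r'.comp φ = ψ.comp r) (hi : φ.comp i = i'.comp ψ) :
    (P ⊓ r.ker).map φ = P' ⊓ r'.ker := by
  have hr' (x : G) : r' (φ x) = ψ (r x) := DFunLike.congr_fun hr x
  apply le_antisymm
  · rintro _ ⟨x, hx, rfl⟩
    obtain ⟨hxP, hxr⟩ := mem_inf.1 hx
    rw [MonoidHom.mem_ker] at hxr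
    exact mem_inf.2 ⟨hP ▸ mem_map_of_mem φ hxP, by rw [MonoidHom.mem_ker, hr', hxr, map_one]⟩
  · intro x' hx'
    obtain ⟨⟨x, hxP, rfl⟩, hx'r⟩ := mem_inf.1 (hP ▸ hx')
    rw [MonoidHom.mem_ker, hr'] at hx'r
    have hφi : φ (i (r x)) = 1 := by
      rw [← MonoidHom.comp_apply, hi, MonoidHom.comp_apply, hx'r, map_one]
    refine ⟨(i (r x))⁻¹ * x, mem_inf.2 ⟨mul_mem (inv_mem (hiP x hxP)) hxP, ?_⟩, ?_⟩
    · rw [MonoidHom.mem_ker, map_mul, map_inv, ← MonoidHom.comp_apply, hri, MonoidHom.id_apply,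
        inv_mul_cancel]
    · rw [map_mul, map_inv, hφi, inv_one, one_mul]

theorem map_ker_eq_of_retraction {φ : G →* G'} (hφ : Surjective φ) {r : G →* K}
    {i : K →* G} (hri : r.comp i = .id K) {r' : G' →* K'} {i' : K' →* G'} {ψ : K →* K'}
    (hr : r'.comp φ = ψ.comp r) (hi : φ.comp i = i'.comp ψ) :
    r.ker.map φ = r'.ker := by
  simpa using map_inf_ker_eq_of_retraction (P := ⊤) (map_top_of_surjective φ hφ) hri
    (fun _ _ ↦ mem_top _) hr hi

end Subgroup

open Monoid.Coprod

theorem cosmash_eq_ker_fst_inf_ker_snd (A B : Type*) [Group A] [Group B] :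
    cosmash A B = (fst : A ∗ B →* A).ker ⊓ (snd : A ∗ B →* B).ker := by
  rw [cosmash, ← MonoidHom.ker_prod, fst_prod_snd]
  rfl

namespace Cosmash

section Projections

variable (A B C : Type*) [Group A] [Group B] [Group C]

def projAB : A ∗ (B ∗ C) →* A ∗ B := map (.id A) fst

def projAC : A ∗ (B ∗ C) →* A ∗ C := map (.id A) snd

def inclAB : A ∗ B →* A ∗ (B ∗ C) := map (.id A) inl

def inclAC : A ∗ C →* A ∗ (B ∗ C) := map (.id A) inr

theorem cosmash₃_eq :
    cosmash₃ A B C =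
      (projAB A B C).ker ⊓ (projAC A B C).ker ⊓ (snd : A ∗ (B ∗ C) →* B ∗ C).ker := by
  have : cosmashCompare₃ A B C = (projAB A B C).prod ((projAC A B C).prod snd) := by
    ext <;> simp [cosmashCompare₃, projAB, projAC]
  rw [cosmash₃, this, MonoidHom.ker_prod, MonoidHom.ker_prod, inf_assoc]

theorem projAB_comp_inclAB : (projAB A B C).comp (inclAB A B C) = .id _ := by
  ext <;> simp [projAB, inclAB]

theorem projAC_comp_inclAC : (projAC A B C).comp (inclAC A B C) = .id _ := by
  ext <;> simp [projAC, inclAC]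

variable {A B C}

theorem projAB_inclAC_projAC (x : A ∗ (B ∗ C)) :
    projAB A B C (inclAC A B C (projAC A B C x)) = inl (fst (projAB A B C x)) := by
  have h : (projAB A B C).comp ((inclAC A B C).comp (projAC A B C)) =
      inl.comp (fst.comp (projAB A B C)) := by
    ext <;> simp [projAB, projAC, inclAC]
  exact DFunLike.congr_fun h x

theorem projAB_inr_snd (x : A ∗ (B ∗ C)) :
    projAB A B C (inr (snd x)) = inr (snd (projAB A B C x)) := by
  simp [projAB]

theorem projAC_inr_snd (x : A ∗ (B ∗ C)) :
    projAC A B C (inr (snd x)) = inr (snd (projAC A B C x)) := by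
  simp [projAC]

theorem inclAC_projAC_mem_ker_projAB {x : A ∗ (B ∗ C)} (hx : x ∈ (projAB A B C).ker) :
    inclAC A B C (projAC A B C x) ∈ (projAB A B C).ker := by
  rw [MonoidHom.mem_ker] at hx ⊢
  rw [projAB_inclAC_projAC, hx, map_one, map_one]

theorem inr_snd_mem_ker_projAB_inf_ker_projAC {x : A ∗ (B ∗ C)}
    (hx : x ∈ (projAB A B C).ker ⊓ (projAC A B C).ker) :
    inr (snd x) ∈ (projAB A B C).ker ⊓ (projAC A B C).ker := by
  simp only [Subgroup.mem_inf, MonoidHom.mem_ker] at hx ⊢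
  rw [projAB_inr_snd, projAC_inr_snd, hx.1, hx.2]
  simp

end Projections

variable {A A' B B' C C' : Type*} [Group A] [Group A'] [Group B] [Group B'] [Group C] [Group C']
  (f : A →* A') (g : B →* B') (l : C →* C')

theorem projAB_comp_map :
    (projAB A' B' C').comp (map f (map g l)) = (map f g).comp (projAB A B C) := by
  ext <;> simp [projAB]

theorem projAC_comp_map :
    (projAC A' B' C').comp (map f (map g l)) = (map f l).comp (projAC A B C) := by
  ext <;> simp [projAC]

theorem map_comp_inclAB :
    (map f (map g l)).comp (inclAB A B C) = (inclAB A' B' C').comp (map f g) := by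
  ext <;> simp [inclAB]

theorem map_comp_inclAC :
    (map f (map g l)).comp (inclAC A B C) = (inclAC A' B' C').comp (map f l) := by
  ext <;> simp [inclAC]

end Cosmash

/-- Induced homomorphisms of free products along surjections map (binary and ternary)
cosmash products onto cosmash products. -/
theorem cosmash_map_surjective {A A' B B' C C' : Type*}
    [Group A] [Group A'] [Group B] [Group B'] [Group C] [Group C']
    (f : A →* A') (g : B →* B') (l : C →* C')
    (hf : Surjective f) (hg : Surjective g) (hl : Surjective l) :
    Subgroup.map (Monoid.Coprod.map f g) (cosmash A B) = cosmash A' B' ∧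
    Subgroup.map (Monoid.Coprod.map f (Monoid.Coprod.map g l)) (cosmash₃ A B C) = cosmash₃ A' B' C' := by
  open Cosmash Subgroup in
  constructor
  · rw [cosmash_eq_ker_fst_inf_ker_snd, cosmash_eq_ker_fst_inf_ker_snd]
    have hfst := map_ker_eq_of_retraction (map_surjective hf hg) fst_comp_inl (fst_comp_map f g)
      (map_comp_inl f g)
    exact map_inf_ker_eq_of_retraction hfst snd_comp_inr (fun _ _ ↦ by simp) (snd_comp_map f g)
      (map_comp_inr f g)
  · rw [cosmash₃_eq, cosmash₃_eq]
    have hAB := map_ker_eq_of_retraction (map_surjective hf (map_surjective hg hl))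
      (projAB_comp_inclAB A B C) (projAB_comp_map f g l) (map_comp_inclAB f g l)
    have hAC := map_inf_ker_eq_of_retraction hAB (projAC_comp_inclAC A B C)
      (fun _ ↦ inclAC_projAC_mem_ker_projAB) (projAC_comp_map f g l) (map_comp_inclAC f g l)
    exact map_inf_ker_eq_of_retraction hAC snd_comp_inr
      (fun _ ↦ inr_snd_mem_ker_projAB_inf_ker_projAC) (snd_comp_map f _) (map_comp_inr f _)
end

section
/- Let A, B, C be groups, θ : A ∗ B ∗ C → (A ∗ B) ∗ C the canonical isomorphism of free products, and ι₁ : A → A ∗ B, ι₂ : B → A ∗ B the coproduct inclusions. Then the cosmash product (A ∗ B) ⋄ C equals the subgroup of (A ∗ B) ∗ C generated by the union of θ(A ⋄ B ⋄ C), (ι₁ ∗ id_C)(A ⋄ C), and (ι₂ ∗ id_C)(B ⋄ C). -/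
open Monoid Function
open scoped Monoid.Coprod

/-- The canonical isomorphism `A ∗ B ∗ C → (A ∗ B) ∗ C` of free products,
as a homomorphism. -/
def assocHom (A B C : Type*) [Group A] [Group B] [Group C] :
    (A ∗ (B ∗ C)) →* ((A ∗ B) ∗ C) :=
  Monoid.Coprod.lift
    ((Monoid.Coprod.inl : (A ∗ B) →* (A ∗ B) ∗ C).comp (Monoid.Coprod.inl : A →* A ∗ B))
    (Monoid.Coprod.lift
      ((Monoid.Coprod.inl : (A ∗ B) →* (A ∗ B) ∗ C).comp (Monoid.Coprod.inr : B →* A ∗ B))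
      (Monoid.Coprod.inr : C →* (A ∗ B) ∗ C))

open Monoid Function
open scoped Monoid.Coprod

section Aux
open Monoid.Coprod

variable (A B C : Type*) [Group A] [Group B] [Group C]

private lemma cosmashCompare_eq :
    cosmashCompare A B = (fst : A ∗ B →* A).prod snd :=
  hom_ext rfl rfl

private lemma mem_cosmash {A B : Type*} [Group A] [Group B] {x : A ∗ B} :
    x ∈ cosmash A B ↔ fst x = 1 ∧ snd x = 1 := by
  rw [cosmash, MonoidHom.mem_ker, cosmashCompare_eq]
  simp [MonoidHom.prod_apply, Prod.ext_iff]

private def qA : ((A ∗ B) ∗ C) →* A ∗ C := map fst (MonoidHom.id C)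
private def qB : ((A ∗ B) ∗ C) →* B ∗ C := map snd (MonoidHom.id C)
private def jA : (A ∗ C) →* ((A ∗ B) ∗ C) := map inl (MonoidHom.id C)
private def jB : (B ∗ C) →* ((A ∗ B) ∗ C) := map inr (MonoidHom.id C)

private def Kmap : ((A ∗ B) ∗ C) →* (A ∗ B) × (A ∗ C) × (B ∗ C) :=
  (fst : (A ∗ B) ∗ C →* A ∗ B).prod ((qA A B C).prod (qB A B C))

private def assocInv : ((A ∗ B) ∗ C) →* (A ∗ (B ∗ C)) :=
  lift (lift inl ((inr : (B ∗ C) →* A ∗ (B ∗ C)).comp inl)) (inr.comp inr)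

private lemma assoc_inv_id :
    (assocHom A B C).comp (assocInv A B C) = MonoidHom.id _ :=
  hom_ext (hom_ext rfl rfl) rfl

private lemma assocHom_surjective : Surjective (assocHom A B C) := fun x =>
  ⟨assocInv A B C x, DFunLike.congr_fun (assoc_inv_id A B C) x⟩

private lemma K_comp_assoc :
    (Kmap A B C).comp (assocHom A B C) = cosmashCompare₃ A B C := by
  refine hom_ext ?_ (hom_ext ?_ ?_) <;> ext x <;>
    simp [Kmap, qA, qB, assocHom, cosmashCompare₃, Prod.ext_iff]

-- composition identities
private lemma h1 : (fst : (A ∗ B) ∗ C →* A ∗ B).comp (jA A B C)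
    = (inl : A →* A ∗ B).comp fst := by
  refine Monoid.Coprod.hom_ext ?_ ?_ <;> ext x <;> simp [jA, jB, qA, qB]
private lemma h2 : (fst : (A ∗ B) ∗ C →* A ∗ B).comp (jB A B C)
    = (inr : B →* A ∗ B).comp fst := by
  refine Monoid.Coprod.hom_ext ?_ ?_ <;> ext x <;> simp [jA, jB, qA, qB]
private lemma h3 : (snd : (A ∗ B) ∗ C →* C).comp (jA A B C) = snd := hom_ext rfl rfl
private lemma h4 : (snd : (A ∗ B) ∗ C →* C).comp (jB A B C) = snd := hom_ext rfl rfl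
private lemma h5 : (qA A B C).comp (jA A B C) = MonoidHom.id _ := hom_ext rfl rfl
private lemma h6 : (qB A B C).comp (jB A B C) = MonoidHom.id _ := hom_ext rfl rfl
private lemma h7 : (qA A B C).comp (jB A B C)
    = (inr : C →* A ∗ C).comp snd := by
  refine Monoid.Coprod.hom_ext ?_ ?_ <;> ext x <;> simp [jA, jB, qA, qB]
private lemma h8 : (qB A B C).comp (jA A B C)
    = (inr : C →* B ∗ C).comp snd := by
  refine Monoid.Coprod.hom_ext ?_ ?_ <;> ext x <;> simp [jA, jB, qA, qB]
private lemma h9 : (fst : A ∗ C →* A).comp (qA A B C)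
    = (fst : A ∗ B →* A).comp fst := hom_ext rfl rfl
private lemma h10 : (snd : A ∗ C →* C).comp (qA A B C) = snd := hom_ext rfl rfl
private lemma h11 : (fst : B ∗ C →* B).comp (qB A B C)
    = (snd : A ∗ B →* B).comp fst := hom_ext rfl rfl
private lemma h12 : (snd : B ∗ C →* C).comp (qB A B C) = snd := hom_ext rfl rfl

private lemma map_theta_eq :
    Subgroup.map (assocHom A B C) (cosmash₃ A B C) = (Kmap A B C).ker := by
  have : cosmash₃ A B C = Subgroup.comap (assocHom A B C) (Kmap A B C).ker := by
    rw [cosmash₃, ← K_comp_assoc]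
    rfl
  rw [this, Subgroup.map_comap_eq_self_of_surjective (assocHom_surjective A B C)]

end Aux

/-- The cosmash product `(A ∗ B) ⋄ C` is the subgroup of `(A ∗ B) ∗ C` generated by
the images of the ternary cosmash product `A ⋄ B ⋄ C` under the associativity
isomorphism `θ`, of `A ⋄ C` under `ι₁ ∗ id_C`, and of `B ⋄ C` under `ι₂ ∗ id_C`. -/
theorem cosmash_coprod_decomposition (A B C : Type*) [Group A] [Group B] [Group C] :
    cosmash (A ∗ B) C =
      Subgroup.map (assocHom A B C) (cosmash₃ A B C) ⊔
      Subgroup.map (Monoid.Coprod.map (Monoid.Coprod.inl : A →* A ∗ B) (MonoidHom.id C))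
        (cosmash A C) ⊔
      Subgroup.map (Monoid.Coprod.map (Monoid.Coprod.inr : B →* A ∗ B) (MonoidHom.id C))
        (cosmash B C) := by
  have jAeq : Monoid.Coprod.map (Monoid.Coprod.inl : A →* A ∗ B) (MonoidHom.id C) = jA A B C := rfl
  have jBeq : Monoid.Coprod.map (Monoid.Coprod.inr : B →* A ∗ B) (MonoidHom.id C) = jB A B C := rfl
  rw [jAeq, jBeq, map_theta_eq]
  apply le_antisymm
  · intro w hw
    obtain ⟨hwf, hws⟩ := mem_cosmash.mp hw
    have e2 := DFunLike.congr_fun (h2 A B C)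
    have e4 := DFunLike.congr_fun (h4 A B C)
    have e11 := DFunLike.congr_fun (h11 A B C) w
    have e12 := DFunLike.congr_fun (h12 A B C) w
    simp only [MonoidHom.comp_apply, MonoidHom.id_apply] at e2 e4 e11 e12
    have hbmem : qB A B C w ∈ cosmash B C :=
      mem_cosmash.mpr ⟨by rw [e11, hwf, map_one], by rw [e12, hws]⟩
    obtain ⟨hbf, hbs⟩ := mem_cosmash.mp hbmem
    set b := qB A B C w with hb
    set w' := w * (jB A B C b)⁻¹ with hw'
    have hw'f : Monoid.Coprod.fst w' = 1 := by
      rw [hw', map_mul, map_inv, e2, hbf, map_one, hwf, one_mul, inv_one]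
    have hw's : Monoid.Coprod.snd w' = 1 := by
      rw [hw', map_mul, map_inv, e4, hbs, hws, one_mul, inv_one]
    have e9 := DFunLike.congr_fun (h9 A B C) w'
    have e10 := DFunLike.congr_fun (h10 A B C) w'
    simp only [MonoidHom.comp_apply] at e9 e10
    have hamem : qA A B C w' ∈ cosmash A C :=
      mem_cosmash.mpr ⟨by rw [e9, hw'f, map_one], by rw [e10, hw's]⟩
    obtain ⟨haf, has⟩ := mem_cosmash.mp hamem
    set a := qA A B C w' with ha
    set w'' := w' * (jA A B C a)⁻¹ with hw''
    have e1 := DFunLike.congr_fun (h1 A B C) a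
    have e5 := DFunLike.congr_fun (h5 A B C) a
    have e8 := DFunLike.congr_fun (h8 A B C) a
    have e6 := DFunLike.congr_fun (h6 A B C) b
    simp only [MonoidHom.comp_apply, MonoidHom.id_apply] at e1 e5 e6 e8
    have hker : w'' ∈ (Kmap A B C).ker := by
      have k1 : Monoid.Coprod.fst w'' = 1 := by
        rw [hw'', map_mul, map_inv, e1, haf, map_one, hw'f, one_mul, inv_one]
      have k2 : qA A B C w'' = 1 := by
        rw [hw'', map_mul, map_inv, e5, ← ha, mul_inv_cancel]
      have k3 : qB A B C w'' = 1 := by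
        rw [hw'', map_mul, map_inv, e8, has, map_one, inv_one, mul_one,
          hw', map_mul, map_inv, e6, ← hb, mul_inv_cancel]
      rw [MonoidHom.mem_ker]
      simp [Kmap, MonoidHom.prod_apply, Prod.ext_iff, k1, k2, k3]
    have hdecomp : w = w'' * jA A B C a * jB A B C b := by
      rw [hw'', hw']; group
    rw [hdecomp]
    exact mul_mem (mul_mem
      (Subgroup.mem_sup_left (Subgroup.mem_sup_left hker))
      (Subgroup.mem_sup_left (Subgroup.mem_sup_right ⟨a, hamem, rfl⟩)))
      (Subgroup.mem_sup_right ⟨b, hbmem, rfl⟩)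
  · refine sup_le (sup_le ?_ ?_) ?_
    · intro x hx
      rw [MonoidHom.mem_ker] at hx
      have k1 : Monoid.Coprod.fst x = 1 := congrArg Prod.fst hx
      have k2 : qA A B C x = 1 := congrArg (Prod.fst ∘ Prod.snd) hx
      have e10 := DFunLike.congr_fun (h10 A B C) x
      simp only [MonoidHom.comp_apply] at e10
      exact mem_cosmash.mpr ⟨k1, by rw [← e10, k2, map_one]⟩
    · rintro _ ⟨x, hx, rfl⟩
      obtain ⟨hf, hs⟩ := mem_cosmash.mp hx
      have e1 := DFunLike.congr_fun (h1 A B C) x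
      have e3 := DFunLike.congr_fun (h3 A B C) x
      simp only [MonoidHom.comp_apply] at e1 e3
      exact mem_cosmash.mpr ⟨by rw [e1, hf, map_one], by rw [e3, hs]⟩
    · rintro _ ⟨x, hx, rfl⟩
      obtain ⟨hf, hs⟩ := mem_cosmash.mp hx
      have e2 := DFunLike.congr_fun (h2 A B C) x
      have e4 := DFunLike.congr_fun (h4 A B C) x
      simp only [MonoidHom.comp_apply] at e2 e4
      exact mem_cosmash.mpr ⟨by rw [e2, hf, map_one], by rw [e4, hs]⟩
end

section
/- Let (f_T, f_G) : (T, G, φ, ∂) → (Q, Q ⋊_ψ P, conj, k) be a surjective morphism of crossed modules of groups, g₁ : P → G a group homomorphism with f_G ∘ g₁ = s, and g_T : Q → T a group homomorphism with f_T ∘ g_T = id_Q and g_T(ψ(x)(q)) = φ(g₁(x))(g_T(q)) for all x ∈ P, q ∈ Q. Then the map g_G : Q ⋊_ψ P → G defined by g_G(q, x) = ∂(g_T(q)) * g₁(x) is a group homomorphism, and it satisfies f_G ∘ g_G = id, g_G ∘ s = g₁, and g_G ∘ k = ∂ ∘ g_T. -/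
open Function

/-- `(T, G, φ, d)` is a crossed module of groups. -/
structure IsXMod {T G : Type*} [Group T] [Group G]
    (φ : G →* MulAut T) (d : T →* G) : Prop where
  compat : ∀ (g : G) (t : T), d (φ g t) = g * d t * g⁻¹
  peiffer : ∀ t t' : T, φ (d t) t' = t * t' * t⁻¹

/-- `(fT, fG)` is a morphism of crossed modules from `(T, G, φ, d)` to
`(T', G', φ', d')`. -/
def XModHom {T G T' G' : Type*} [Group T] [Group G] [Group T'] [Group G']
    (φ : G →* MulAut T) (d : T →* G) (φ' : G' →* MulAut T') (d' : T' →* G')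
    (fT : T →* T') (fG : G →* G') : Prop :=
  d'.comp fT = fG.comp d ∧ ∀ (g : G) (t : T), fT (φ g t) = φ' (fG g) (fT t)

/-- A crossed module `(T, G, φ, d)` is projective if every surjective morphism of
crossed modules onto it admits a section that is a morphism of crossed modules. -/
def IsProjXMod {T G : Type*} [Group T] [Group G]
    (φ : G →* MulAut T) (d : T →* G) : Prop :=
  ∀ (T' G' : Type*) [Group T'] [Group G'] (φ' : G' →* MulAut T') (d' : T' →* G'),
    IsXMod φ' d' →
    ∀ (fT : T' →* T) (fG : G' →* G), XModHom φ' d' φ d fT fG →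
      Function.Surjective fT → Function.Surjective fG →
      ∃ (gT : T →* T') (gG : G →* G'), XModHom φ d φ' d' gT gG ∧
        fT.comp gT = MonoidHom.id T ∧ fG.comp gG = MonoidHom.id G

/-- The conjugation action core of the semidirect product `Q ⋊[ψ] P` on `Q`:
`(q, x)` acts by `q' ↦ q * ψ x q' * q⁻¹`. -/
def sdConj {Q P : Type*} [Group Q] [Group P] (ψ : P →* MulAut Q) :
    (Q ⋊[ψ] P) →* MulAut Q :=
  SemidirectProduct.lift (MulAut.conj) ψ (by
    intro x
    ext q q'
    simp [MulAut.conj, mul_assoc])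

/-- Given a surjective morphism of crossed modules `(fT, fG) : (T, G, φ, d) →
(Q, Q ⋊[ψ] P, conj, inl)`, a lifting `g₁` of `inr` through `fG`, and an equivariant
section `gT` of `fT`, the map `gG (q, x) = d (gT q) * g₁ x` is a group homomorphism
satisfying `fG ∘ gG = id`, `gG ∘ inr = g₁` and `gG ∘ inl = d ∘ gT`. -/
theorem exists_section_of_equivariant_section {P Q T G : Type*}
    [Group P] [Group Q] [Group T] [Group G] (ψ : P →* MulAut Q)
    (φ : G →* MulAut T) (d : T →* G) (hxm : IsXMod φ d)
    (fT : T →* Q) (fG : G →* Q ⋊[ψ] P)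
    (hhom : XModHom φ d (sdConj ψ) (SemidirectProduct.inl : Q →* Q ⋊[ψ] P) fT fG)
    (hfT : Surjective fT) (hfG : Surjective fG)
    (g₁ : P →* G) (hg₁ : fG.comp g₁ = SemidirectProduct.inr)
    (gT : Q →* T) (hgT : fT.comp gT = MonoidHom.id Q)
    (hequiv : ∀ (x : P) (q : Q), gT (ψ x q) = φ (g₁ x) (gT q)) :
    ∃ gG : (Q ⋊[ψ] P) →* G,
      (∀ e : Q ⋊[ψ] P, gG e = d (gT e.left) * g₁ e.right) ∧
      fG.comp gG = MonoidHom.id (Q ⋊[ψ] P) ∧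
      gG.comp (SemidirectProduct.inr : P →* Q ⋊[ψ] P) = g₁ ∧
      gG.comp (SemidirectProduct.inl : Q →* Q ⋊[ψ] P) = d.comp gT := by
  refine ⟨MonoidHom.mk' (fun e => d (gT e.left) * g₁ e.right) ?_, fun e => rfl, ?_, ?_, ?_⟩
  · intro a b
    simp only [SemidirectProduct.mul_left, SemidirectProduct.mul_right, map_mul,
      hequiv, hxm.compat]
    group
  · refine MonoidHom.ext fun e => ?_
    have h1 : fG (d (gT e.left)) = SemidirectProduct.inl e.left := by
      have := congrFun (congrArg (fun f => f.toFun) hhom.1) (gT e.left)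
      have h2 := congrFun (congrArg (fun f => f.toFun) hgT) e.left
      simp at this h2
      rw [← this, h2]
    have h3 : fG (g₁ e.right) = SemidirectProduct.inr e.right :=
      congrFun (congrArg (fun f => f.toFun) hg₁) e.right
    simp only [MonoidHom.comp_apply, MonoidHom.mk'_apply, map_mul, h1, h3,
      MonoidHom.id_apply]
    exact SemidirectProduct.inl_left_mul_inr_right e
  · ext x
    simp
  · ext q
    simp
end

section
/- Let H be a group, (T, G, φ, ∂) a crossed module of groups, and f : H → T, g : H → G group homomorphisms. Then there exists a unique morphism of crossed modules (f_T, f_G) : L(H) → (T, G, φ, ∂) such that f_T ∘ η = f and f_G ∘ ι₁ = g. (Hence H ↦ L(H) is left adjoint to the functor sending a crossed module (T, G, φ, ∂) of groups to the group T × G.) -/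
open Function
open scoped Monoid.Coprod

/-- `π_B : B ∗ X →* B`, induced by the identity on `B` and trivial on `X`. -/
def piHom (B X : Type*) [Group B] [Group X] : (B ∗ X) →* B :=
  Monoid.Coprod.lift (MonoidHom.id B) (1 : X →* B)

/-- `B ♭ X = ker (π_B : B ∗ X →* B)`. -/
def flatSub (B X : Type*) [Group B] [Group X] : Subgroup (B ∗ X) :=
  (piHom B X).ker

instance flatSub_normal (B X : Type*) [Group B] [Group X] : (flatSub B X).Normal :=
  MonoidHom.normal_ker (piHom B X)

/-- `η : H →* H ♭ H`, the corestriction of the second coproduct inclusion. -/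
def etaHom (H : Type*) [Group H] : H →* flatSub H H :=
  MonoidHom.codRestrict (Monoid.Coprod.inr : H →* H ∗ H) (flatSub H H)
    (by intro x; simp [flatSub, piHom, MonoidHom.mem_ker])
open Function
open scoped Monoid.Coprod

section Aux

variable {H T G : Type*} [Group H] [Group T] [Group G]
  (φ : G →* MulAut T) (d : T →* G)

/-- `h ↦ ((f h)⁻¹, d (f h))` is a homomorphism when `(φ, d)` is a crossed module. -/
def thetaB (hxm : IsXMod φ d) (f : H →* T) : H →* T ⋊[φ] G :=
  MonoidHom.mk' (fun h => ⟨(f h)⁻¹, d (f h)⟩) (by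
    intro a b
    ext
    · show (f (a * b))⁻¹ = (f a)⁻¹ * φ (d (f a)) (f b)⁻¹
      rw [map_inv, hxm.peiffer]
      simp [mul_assoc]
    · show d (f (a * b)) = d (f a) * d (f b)
      simp)

/-- `(t, g) ↦ d t * g` is a homomorphism when `(φ, d)` is a crossed module. -/
def cHom (hxm : IsXMod φ d) : (T ⋊[φ] G) →* G :=
  MonoidHom.mk' (fun p => d p.left * p.right) (by
    intro a b
    show d (a.left * φ a.right b.left) * (a.right * b.right) = _
    rw [map_mul, hxm.compat]
    group)

end Aux

/-- The kernel of `piHom` is the normal closure of the range of `inr`. -/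
theorem flatSub_le_normalClosure (H : Type*) [Group H] :
    flatSub H H ≤ Subgroup.normalClosure (Set.range (Monoid.Coprod.inr : H →* H ∗ H)) := by
  set N := Subgroup.normalClosure (Set.range (Monoid.Coprod.inr : H →* H ∗ H))
  have hN : N.Normal := Subgroup.normalClosure_normal
  set q := QuotientGroup.mk' N
  have hq : q = (q.comp Monoid.Coprod.inl).comp (piHom H H) := by
    apply Monoid.Coprod.hom_ext
    · ext x
      simp [piHom]
    · ext x
      simp only [MonoidHom.comp_apply, piHom, Monoid.Coprod.lift_apply_inr,
        MonoidHom.one_apply, map_one]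
      have : (Monoid.Coprod.inr x : H ∗ H) ∈ N :=
        Subgroup.subset_normalClosure ⟨x, rfl⟩
      simpa [q, QuotientGroup.eq_one_iff] using this
  intro x hx
  have hx' : piHom H H x = 1 := hx
  have : q x = 1 := by rw [hq]; simp [hx']
  simpa [q, QuotientGroup.eq_one_iff] using this

/-- For any group `H`, crossed module `(T, G, φ, d)` and homomorphisms `f : H →* T`,
`g : H →* G`, there is a unique morphism of crossed modules
`(fT, fG) : L(H) = (H ♭ H, H ∗ H, conj, κ) → (T, G, φ, d)`
with `fT ∘ η = f` and `fG ∘ ι₁ = g`.  (Hence `L` is left adjoint to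
`(T, G, φ, d) ↦ T × G`.) -/
theorem LH_universal_property {H T G : Type*} [Group H] [Group T] [Group G]
    (φ : G →* MulAut T) (d : T →* G) (hxm : IsXMod φ d)
    (f : H →* T) (g : H →* G) :
    ∃! fp : (flatSub H H →* T) × ((H ∗ H) →* G),
      XModHom (MulAut.conjNormal : (H ∗ H) →* MulAut (flatSub H H))
        (flatSub H H).subtype φ d fp.1 fp.2 ∧
      fp.1.comp (etaHom H) = f ∧
      fp.2.comp (Monoid.Coprod.inl : H →* H ∗ H) = g := by
  classical
  set Θ : (H ∗ H) →* T ⋊[φ] G :=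
    Monoid.Coprod.lift (SemidirectProduct.inr.comp g) (thetaB φ d hxm f) with hΘdef
  set fG : (H ∗ H) →* G := SemidirectProduct.rightHom.comp Θ with hfGdef
  have hTr : ∀ w : H ∗ H, (Θ w).right = fG w := fun w => rfl
  -- Θ on generators
  have hΘinl : ∀ x : H, Θ (Monoid.Coprod.inl x) = SemidirectProduct.inr (g x) :=
    fun x => Monoid.Coprod.lift_apply_inl _ _ x
  have hΘinr : ∀ x : H, Θ (Monoid.Coprod.inr x) = ⟨(f x)⁻¹, d (f x)⟩ :=
    fun x => Monoid.Coprod.lift_apply_inr _ _ x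
  -- c ∘ Θ = g ∘ π
  have hc : (cHom φ d hxm).comp Θ = g.comp (piHom H H) := by
    apply Monoid.Coprod.hom_ext
    · ext x
      show (cHom φ d hxm) (Θ (Monoid.Coprod.inl x)) = g (piHom H H (Monoid.Coprod.inl x))
      rw [hΘinl]
      show d (1 : T) * g x = g (piHom H H (Monoid.Coprod.inl x))
      simp [piHom]
    · ext x
      show (cHom φ d hxm) (Θ (Monoid.Coprod.inr x)) = g (piHom H H (Monoid.Coprod.inr x))
      rw [hΘinr]
      show d (f x)⁻¹ * d (f x) = g (piHom H H (Monoid.Coprod.inr x))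
      simp [piHom]
  have key : ∀ x : flatSub H H, d ((Θ (x : H ∗ H)).left) = (fG (x : H ∗ H))⁻¹ := by
    intro x
    have h1 : (cHom φ d hxm) (Θ (x : H ∗ H)) = g (piHom H H (x : H ∗ H)) :=
      DFunLike.congr_fun hc (x : H ∗ H)
    have h2 : piHom H H (x : H ∗ H) = 1 := x.2
    have h3 : d ((Θ (x : H ∗ H)).left) * (Θ (x : H ∗ H)).right = 1 := by
      rw [h2, map_one] at h1; exact h1
    rw [hTr] at h3
    exact eq_inv_of_mul_eq_one_left h3
  have key' : ∀ x : flatSub H H, d (((Θ (x : H ∗ H)).left)⁻¹) = fG (x : H ∗ H) := by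
    intro x; rw [map_inv, key, inv_inv]
  -- fT
  set fT : flatSub H H →* T :=
    MonoidHom.mk' (fun x => ((Θ (x : H ∗ H)).left)⁻¹) (by
      intro a b
      have hm : Θ ((a * b : flatSub H H) : H ∗ H) = Θ (a : H ∗ H) * Θ (b : H ∗ H) := by
        push_cast; rw [map_mul]
      show (Θ ((a * b : flatSub H H) : H ∗ H)).left⁻¹
          = (Θ (a : H ∗ H)).left⁻¹ * (Θ (b : H ∗ H)).left⁻¹
      rw [hm, SemidirectProduct.mul_left, mul_inv_rev, hTr, ← key' a, ← map_inv,
        hxm.peiffer]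
      group) with hfTdef
  have hfT : ∀ x : flatSub H H, fT x = ((Θ (x : H ∗ H)).left)⁻¹ := fun _ => rfl
  -- the morphism conditions
  have hcomm : d.comp fT = fG.comp (flatSub H H).subtype := by
    ext x
    exact key' x
  have hequiv : ∀ (w : H ∗ H) (x : flatSub H H),
      fT (MulAut.conjNormal w x) = φ (fG w) (fT x) := by
    intro w x
    have hval : ((MulAut.conjNormal w x : flatSub H H) : H ∗ H) = w * (x : H ∗ H) * w⁻¹ :=
      MulAut.conjNormal_apply w x
    have hm : Θ ((MulAut.conjNormal w x : flatSub H H) : H ∗ H)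
        = Θ w * Θ (x : H ∗ H) * (Θ w)⁻¹ := by
      rw [hval, map_mul, map_mul, map_inv]
    rw [hfT, hfT, hm]
    set a := (Θ w).left with ha
    set s := (Θ (x : H ∗ H)).left with hs
    have hxr : (Θ (x : H ∗ H)).right = d s⁻¹ := by
      rw [hTr, ← key' x]
    rw [SemidirectProduct.mul_left, SemidirectProduct.mul_left,
      SemidirectProduct.inv_left, SemidirectProduct.mul_right, hxr, hTr]
    set b := fG w with hb
    have h1 : (φ (b * d s⁻¹)) ((φ b⁻¹) a⁻¹) = (φ b) s⁻¹ * a⁻¹ * ((φ b) s⁻¹)⁻¹ := by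
      have h2 : (φ (b * d s⁻¹)) ((φ b⁻¹) a⁻¹) = φ (b * d s⁻¹ * b⁻¹) a⁻¹ := by
        simp [mul_assoc]
      rw [h2, show b * d s⁻¹ * b⁻¹ = d ((φ b) s⁻¹) from (hxm.compat _ _).symm,
        hxm.peiffer]
    rw [h1]
    simp only [map_inv, ← hs, ← ha]
    group
  refine ⟨⟨fT, fG⟩, ⟨⟨hcomm, hequiv⟩, ?_, ?_⟩, ?_⟩
  · ext h
    show fT (etaHom H h) = f h
    have : ((etaHom H h : flatSub H H) : H ∗ H) = Monoid.Coprod.inr h := rfl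
    rw [hfT, this, hΘinr]
    simp
  · ext h
    show fG (Monoid.Coprod.inl h) = g h
    rw [hfGdef]
    show SemidirectProduct.rightHom (Θ (Monoid.Coprod.inl h)) = g h
    rw [hΘinl, SemidirectProduct.rightHom_inr]
  -- uniqueness
  · rintro ⟨fT', fG'⟩ ⟨⟨hcomm', hequiv'⟩, heta', hinl'⟩
    have hsub : ∀ h : H, ((etaHom H h : flatSub H H) : H ∗ H) = Monoid.Coprod.inr h :=
      fun _ => rfl
    have hfG'G : fG' = fG := by
      apply Monoid.Coprod.hom_ext
      · rw [hinl']
        ext h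
        show g h = fG (Monoid.Coprod.inl h)
        rw [hfGdef]
        show g h = SemidirectProduct.rightHom (Θ (Monoid.Coprod.inl h))
        rw [hΘinl, SemidirectProduct.rightHom_inr]
      · ext h
        have h1 : fG' (Monoid.Coprod.inr h) = d (fT' (etaHom H h)) := by
          have := DFunLike.congr_fun hcomm' (etaHom H h)
          simp only [MonoidHom.comp_apply, Subgroup.coe_subtype, hsub] at this
          exact this.symm
        have h2 : fG (Monoid.Coprod.inr h) = d (fT (etaHom H h)) := by
          have := DFunLike.congr_fun hcomm (etaHom H h)
          simp only [MonoidHom.comp_apply, Subgroup.coe_subtype, hsub] at this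
          exact this.symm
        have h3 : fT' (etaHom H h) = f h := DFunLike.congr_fun heta' h
        have h4 : fT (etaHom H h) = f h := by
          rw [hfT, hsub, hΘinr]; simp
        show fG' (Monoid.Coprod.inr h) = fG (Monoid.Coprod.inr h)
        rw [h1, h2, h3, h4]
    -- fT' = fT via normal closure
    set S : Subgroup (H ∗ H) := (fT'.eqLocus fT).map (flatSub H H).subtype with hSdef
    have hSmem : ∀ x : flatSub H H, (x : H ∗ H) ∈ S ↔ fT' x = fT x := by
      intro x
      constructor
      · rintro ⟨y, hy, hyx⟩
        have : y = x := Subtype.ext hyx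
        rwa [← this]
      · intro hx
        exact ⟨x, hx, rfl⟩
    have hSnormal : S.Normal := by
      constructor
      intro n hn w
      rcases hn with ⟨y, hy, hyn⟩
      have heq : w * n * w⁻¹ = ((MulAut.conjNormal w y : flatSub H H) : H ∗ H) := by
        rw [MulAut.conjNormal_apply, show ((y : H ∗ H) = n) from hyn]
      rw [heq, hSmem]
      rw [hequiv' w y, hequiv w y, hfG'G, hy]
    have hrange : Set.range (Monoid.Coprod.inr : H →* H ∗ H) ⊆ (S : Set (H ∗ H)) := by
      rintro _ ⟨h, rfl⟩
      have : (Monoid.Coprod.inr h : H ∗ H) = ((etaHom H h : flatSub H H) : H ∗ H) := rfl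
      rw [this, SetLike.mem_coe, hSmem]
      have h3 : fT' (etaHom H h) = f h := DFunLike.congr_fun heta' h
      rw [h3, hfT, hsub, hΘinr]; simp
    have hle : flatSub H H ≤ S :=
      le_trans (flatSub_le_normalClosure H) (Subgroup.normalClosure_le_normal hrange)
    have hfT'T : fT' = fT := by
      ext x
      exact (hSmem x).mp (hle x.2)
    exact Prod.ext hfT'T hfG'G
end

section
/- Let S be a set and F = FreeGroup(S) with canonical map of : S → F. For every crossed module (T, G, φ, ∂) of groups and all functions a : S → T and b : S → G, there exists a unique morphism of crossed modules (f_T, f_G) : L(F) → (T, G, φ, ∂) with f_T(η(of(s))) = a(s) and f_G(ι₁(of(s))) = b(s) for all s ∈ S. (Thus L(FreeGroup(S)) is the free crossed module of groups on the set S.) -/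
open Function
open scoped Monoid.Coprod

/-!
Send `F ∗ F` to the semidirect product `T ⋊ G` by `ι₁ (of s) ↦ (1, b s)` and
`ι₂ (of s) ↦ (a s, 1)`. Its `G`-component is `b ∘ π`, so `F ♭ F` lands in `T`, which gives `f_T`;
composing with the homomorphism `(t, g) ↦ ∂ t * g` (a homomorphism because `∂` is equivariant) gives
`f_G`, and the Peiffer identity makes `f_T` equivariant. For uniqueness, `f_G` is fixed on
`ι₁ (of s)` and on `ι₂ (of s) = η (of s)`, while the equalizer of two candidates `f_T` is normal
in `F ∗ F` and contains `ι₂ F`, whose normal closure contains `F ♭ F`. Freeness of `F` is used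
only to extend `a` and `b` to homomorphisms.
-/

namespace IsXMod

variable {T G : Type*} [Group T] [Group G] {φ : G →* MulAut T} {d : T →* G}

def sdLift (hxm : IsXMod φ d) : (T ⋊[φ] G) →* G :=
  SemidirectProduct.lift d (MonoidHom.id G) fun g => by ext t; simp [hxm.compat]

@[simp]
lemma sdLift_apply (hxm : IsXMod φ d) (p : T ⋊[φ] G) : hxm.sdLift p = d p.left * p.right := rfl

lemma conj_inl (hxm : IsXMod φ d) (p : T ⋊[φ] G) (t : T) :
    p * SemidirectProduct.inl t * p⁻¹ = SemidirectProduct.inl (φ (hxm.sdLift p) t) := by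
  ext
  · simp [map_mul, MulAut.mul_apply, hxm.peiffer, mul_assoc]
  · simp

end IsXMod

lemma flatSub_le_normalClosure_range_inr (B X : Type*) [Group B] [Group X] :
    flatSub B X ≤ Subgroup.normalClosure (Set.range (Monoid.Coprod.inr : X →* B ∗ X)) := by
  set N := Subgroup.normalClosure (Set.range (Monoid.Coprod.inr : X →* B ∗ X))
  have hinr (x : X) : ((Monoid.Coprod.inr x : B ∗ X) : (B ∗ X) ⧸ N) = 1 :=
    (QuotientGroup.eq_one_iff _).mpr (Subgroup.subset_normalClosure (Set.mem_range_self x))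
  -- modulo `N`, every `w` is congruent to `inl (π_B w)`
  have hπ : (QuotientGroup.mk' N).comp (Monoid.Coprod.inl.comp (piHom B X)) =
      QuotientGroup.mk' N := by
    ext x
    · simp [piHom]
    · simp [piHom, hinr]
  intro w hw
  rw [← QuotientGroup.eq_one_iff, ← QuotientGroup.mk'_apply, ← DFunLike.congr_fun hπ w]
  simp [MonoidHom.mem_ker.mp hw]

section

variable {H T G : Type*} [Group H] [Group T] [Group G] {φ : G →* MulAut T} {d : T →* G}

lemma flatSub_hom_ext {fG : (H ∗ H) →* G} {f f' : flatSub H H →* T}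
    (hf : ∀ g w, f (MulAut.conjNormal g w) = φ (fG g) (f w))
    (hf' : ∀ g w, f' (MulAut.conjNormal g w) = φ (fG g) (f' w))
    (hη : f.comp (etaHom H) = f'.comp (etaHom H)) : f = f' := by
  set E := (f.eqLocus f').map (flatSub H H).subtype
  have hE : E.Normal := ⟨by
    rintro _ ⟨u, hu, rfl⟩ g
    refine ⟨MulAut.conjNormal g u, ?_, MulAut.conjNormal_apply g u⟩
    change f _ = f' _
    rw [hf, hf', show f u = f' u from hu]⟩
  have hinr : Set.range (Monoid.Coprod.inr : H →* H ∗ H) ⊆ E := by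
    rintro _ ⟨x, rfl⟩
    exact ⟨etaHom H x, DFunLike.congr_fun hη x, rfl⟩
  have hle : flatSub H H ≤ E :=
    (flatSub_le_normalClosure_range_inr H H).trans (Subgroup.normalClosure_le_normal hinr)
  refine MonoidHom.eq_of_eqOn_top fun w _ => ?_
  obtain ⟨u, hu, huw⟩ := hle w.2
  rwa [← Subtype.ext huw]

lemma XModHom.comp_inr {fT : flatSub H H →* T} {fG : (H ∗ H) →* G}
    (hf : XModHom MulAut.conjNormal (flatSub H H).subtype φ d fT fG) :
    fG.comp Monoid.Coprod.inr = d.comp (fT.comp (etaHom H)) := by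
  ext x
  exact (DFunLike.congr_fun hf.1 (etaHom H x)).symm

variable (φ) (α : H →* G) (β : H →* T)

def coprodToSd : (H ∗ H) →* T ⋊[φ] G :=
  Monoid.Coprod.lift (SemidirectProduct.inr.comp α) (SemidirectProduct.inl.comp β)

lemma coprodToSd_right (w : H ∗ H) : (coprodToSd φ α β w).right = α (piHom H H w) := by
  change (SemidirectProduct.rightHom.comp (coprodToSd φ α β)) w = (α.comp (piHom H H)) w
  congr 1
  ext x <;> simp [coprodToSd, piHom]

def flatLift : flatSub H H →* T where
  toFun w := (coprodToSd φ α β w).left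
  map_one' := by simp
  map_mul' w w' := by
    simp [coprodToSd_right, MonoidHom.mem_ker.mp w.2]

lemma inl_flatLift (w : flatSub H H) :
    SemidirectProduct.inl (flatLift φ α β w) = coprodToSd φ α β w := by
  ext
  · rfl
  · simp [coprodToSd_right, MonoidHom.mem_ker.mp w.2]

lemma flatLift_comp_etaHom : (flatLift φ α β).comp (etaHom H) = β := by
  ext x
  change (coprodToSd φ α β (Monoid.Coprod.inr x)).left = β x
  simp [coprodToSd]

variable {φ}

def coprodLift (hxm : IsXMod φ d) : (H ∗ H) →* G := hxm.sdLift.comp (coprodToSd φ α β)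

lemma coprodLift_comp_inl (hxm : IsXMod φ d) :
    (coprodLift α β hxm).comp Monoid.Coprod.inl = α := by
  ext x
  simp [coprodLift, coprodToSd]

lemma xModHom_flatLift_coprodLift (hxm : IsXMod φ d) :
    XModHom MulAut.conjNormal (flatSub H H).subtype φ d (flatLift φ α β) (coprodLift α β hxm) := by
  refine ⟨?_, fun g w => ?_⟩
  · ext w
    simp [coprodLift, ← inl_flatLift]
  · apply SemidirectProduct.inl_injective (φ := φ)
    rw [inl_flatLift, coprodLift, MonoidHom.comp_apply, ← hxm.conj_inl, inl_flatLift,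
      MulAut.conjNormal_apply, map_mul, map_mul, map_inv]

end

theorem L_universal_property {H T G : Type*} [Group H] [Group T] [Group G]
    {φ : G →* MulAut T} {d : T →* G} (hxm : IsXMod φ d) (α : H →* G) (β : H →* T) :
    ∃! fp : (flatSub H H →* T) × ((H ∗ H) →* G),
      XModHom MulAut.conjNormal (flatSub H H).subtype φ d fp.1 fp.2 ∧
        fp.1.comp (etaHom H) = β ∧ fp.2.comp Monoid.Coprod.inl = α := by
  have hlift := xModHom_flatLift_coprodLift α β hxm
  refine ⟨(flatLift φ α β, coprodLift α β hxm),
    ⟨hlift, flatLift_comp_etaHom φ α β, coprodLift_comp_inl α β hxm⟩, ?_⟩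
  rintro ⟨fT, fG⟩ ⟨hf, hfη, hfinl⟩
  have hG : fG = coprodLift α β hxm := by
    refine Monoid.Coprod.hom_ext (hfinl.trans (coprodLift_comp_inl α β hxm).symm) ?_
    rw [hf.comp_inr, hlift.comp_inr, hfη, flatLift_comp_etaHom]
  have hT : fT = flatLift φ α β := by
    refine flatSub_hom_ext (fG := fG) hf.2 ?_ (hfη.trans (flatLift_comp_etaHom φ α β).symm)
    rw [hG]
    exact hlift.2
  exact Prod.ext hT hG

lemma FreeGroup.eq_lift_iff {S M : Type*} [Group M] {f : FreeGroup S →* M} {a : S → M} :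
    f = FreeGroup.lift a ↔ ∀ s, f (FreeGroup.of s) = a s :=
  FreeGroup.lift.symm_apply_eq.symm.trans funext_iff

/-- `L(FreeGroup S)` is the free crossed module of groups on the set `S`: for every
crossed module `(T, G, φ, d)` and functions `a : S → T`, `b : S → G` there is a unique
morphism of crossed modules `(fT, fG) : L(FreeGroup S) → (T, G, φ, d)` with
`fT (η (of s)) = a s` and `fG (ι₁ (of s)) = b s` for all `s : S`. -/
theorem LFree_universal_property {S T G : Type*} [Group T] [Group G]
    (φ : G →* MulAut T) (d : T →* G) (hxm : IsXMod φ d)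
    (a : S → T) (b : S → G) :
    ∃! fp : (flatSub (FreeGroup S) (FreeGroup S) →* T) ×
        ((FreeGroup S ∗ FreeGroup S) →* G),
      XModHom
        (MulAut.conjNormal :
          (FreeGroup S ∗ FreeGroup S) →* MulAut (flatSub (FreeGroup S) (FreeGroup S)))
        (flatSub (FreeGroup S) (FreeGroup S)).subtype φ d fp.1 fp.2 ∧
      (∀ s : S, fp.1 (etaHom (FreeGroup S) (FreeGroup.of s)) = a s) ∧
      (∀ s : S, fp.2 ((Monoid.Coprod.inl : FreeGroup S →* FreeGroup S ∗ FreeGroup S)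
        (FreeGroup.of s)) = b s) := by
  refine (existsUnique_congr fun fp => ?_).mp
    (L_universal_property hxm (FreeGroup.lift b) (FreeGroup.lift a))
  simp only [FreeGroup.eq_lift_iff, MonoidHom.comp_apply]
end

section
/- Let g : K → A and f : A → B be group homomorphisms with f surjective and range(g) = ker(f). Then the induced homomorphisms on abelianizations form an exact sequence K^{ab} → A^{ab} → B^{ab} → 0: the induced map A^{ab} → B^{ab} is surjective and its kernel equals the range of the induced map K^{ab} → A^{ab}. -/
open Function

lemma abel_of_surj {G : Type*} [Group G] : Surjective (Abelianization.of (G := G)) :=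
  fun b => Quotient.inductionOn b (fun a => ⟨a, rfl⟩)

lemma abel_of_eq_one_iff {G : Type*} [Group G] (a : G) :
    Abelianization.of a = 1 ↔ a ∈ commutator G :=
  QuotientGroup.eq_one_iff a

/-- Abelianization is sequentially right-exact: if `g : K →* A` and `f : A →* B` with
`f` surjective and `range g = ker f`, then the induced sequence
`K^{ab} → A^{ab} → B^{ab} → 0` is exact. -/
theorem abelianization_right_exact {K A B : Type*} [Group K] [Group A] [Group B]
    (g : K →* A) (f : A →* B) (hf : Surjective f) (h : g.range = f.ker) :
    Surjective (Abelianization.map f) ∧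
    (Abelianization.map f).ker = (Abelianization.map g).range := by
  have hcomm : (commutator A).map f = commutator B := by
    rw [commutator_def, Subgroup.map_commutator, Subgroup.map_top_of_surjective f hf,
      ← commutator_def]
  constructor
  · intro b
    obtain ⟨b, rfl⟩ := abel_of_surj b
    obtain ⟨a, rfl⟩ := hf b
    exact ⟨Abelianization.of a, rfl⟩
  · ext x
    obtain ⟨a, rfl⟩ := abel_of_surj x
    simp only [MonoidHom.mem_ker, MonoidHom.mem_range]
    constructor
    · intro hx
      have : f a ∈ commutator B := by
        rw [← abel_of_eq_one_iff]
        exact hx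
      rw [← hcomm] at this
      obtain ⟨c, hc, hfc⟩ := this
      have hker : a * c⁻¹ ∈ f.ker := by
        simp [MonoidHom.mem_ker, hfc]
      rw [← h] at hker
      obtain ⟨k, hk⟩ := hker
      refine ⟨Abelianization.of k, ?_⟩
      have : Abelianization.of (g k) = Abelianization.of a := by
        rw [hk, map_mul, map_inv, (abel_of_eq_one_iff c).2 hc, inv_one, mul_one]
      simpa [Abelianization.map_of] using this
    · rintro ⟨y, hy⟩
      obtain ⟨k, rfl⟩ := abel_of_surj y
      have : f (g k) = 1 := by
        have : g k ∈ f.ker := h ▸ ⟨k, rfl⟩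
        exact this
      rw [Abelianization.map_of] at hy
      rw [← hy]
      simp [this]
end
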